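/- arXiv:1804.06095 — 6 statements merged into one kernel-verified Lean document; each statement's English description precedes it below -/
import Mathlib

section
/- For fixed positive definite matrices Q^(1),…,Q^(K), the function M ↦ Σ_k LogDet(Q^(k), M) over the positive definite cone is minimized at the arithmetic mean M = (1/K) Σ_k Q^(k). -/
/-!
Writing `D` for `logDetDiv` and `A` for the mean of the `Q k`, we have the bias–variance identity
`∑ k, D(Q k, M) = ∑ k, D(Q k, A) + K • D(A, M)`, because `D(Q, M)` is affine in `Q` apart from
the term `log det Q`, which does not involve `M`. So it suffices that `D(A, M) ≥ 0`. Congruence by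
`S = √(M⁻¹)` turns `D(A, M)` into `(tr B - n - log det B) / 2` for the positive definite
`B = S A S`, and this is `∑ (λ - 1 - log λ) / 2 ≥ 0` over the eigenvalues `λ` of `B`.
-/

noncomputable def logDetDiv {n : Type*} [Fintype n] [DecidableEq n]
    (Q M : Matrix n n ℝ) : ℝ :=
  (1 / 2) * (Real.log M.det - Real.log Q.det + (M⁻¹ * (Q - M)).trace)

open Matrix Finset

variable {n : Type*} [Fintype n] [DecidableEq n]

theorem Matrix.PosDef.log_det_le_trace_sub_card {B : Matrix n n ℝ} (hB : B.PosDef) :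
    Real.log B.det ≤ B.trace - Fintype.card n := by
  have hpos := hB.eigenvalues_pos
  rw [hB.isHermitian.det_eq_prod_eigenvalues, hB.isHermitian.trace_eq_sum_eigenvalues]
  simp only [RCLike.ofReal_real_eq_id, id]
  rw [Real.log_prod fun i _ => (hpos i).ne']
  calc ∑ i, Real.log (hB.isHermitian.eigenvalues i)
      ≤ ∑ i, (hB.isHermitian.eigenvalues i - 1) :=
        sum_le_sum fun i _ => Real.log_le_sub_one_of_pos (hpos i)
    _ = ∑ i, hB.isHermitian.eigenvalues i - Fintype.card n := by
        simp [sum_sub_distrib]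

open scoped MatrixOrder in
theorem logDetDiv_nonneg {A M : Matrix n n ℝ} (hA : A.PosDef) (hM : M.PosDef) :
    0 ≤ logDetDiv A M := by
  set S := CFC.sqrt M⁻¹
  have hS : S.IsHermitian := (CFC.sqrt_nonneg M⁻¹).posSemidef.isHermitian
  have hSS : S * S = M⁻¹ := CFC.sqrt_mul_sqrt_self _ hM.inv.posSemidef.nonneg
  have hS_unit : IsUnit S := isUnit_of_mul_isUnit_left (hSS ▸ hM.inv.isUnit)
  have hB : (S * A * S).PosDef := by
    have := hA.conjTranspose_mul_mul_same (mulVec_injective_of_isUnit hS_unit)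
    rwa [hS.eq] at this
  have hdet : Real.log (S * A * S).det = Real.log A.det - Real.log M.det := by
    rw [det_mul, mul_comm, det_mul, ← mul_assoc, ← det_mul, hSS, det_nonsing_inv,
      Ring.inverse_eq_inv', Real.log_mul (inv_pos.2 hM.det_pos).ne' hA.det_pos.ne', Real.log_inv]
    ring
  have htrace : (S * A * S).trace = (M⁻¹ * A).trace := by
    rw [trace_mul_cycle, hSS]
  have hMM : (M⁻¹ * M).trace = Fintype.card n := by
    rw [nonsing_inv_mul M hM.det_pos.ne'.isUnit, trace_one]
  have key := hB.log_det_le_trace_sub_card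
  rw [hdet, htrace] at key
  rw [logDetDiv, Matrix.mul_sub, trace_sub, hMM]
  linarith

theorem sum_logDetDiv_eq_sum_logDetDiv_add {ι : Type*} [Fintype ι] {Q : ι → Matrix n n ℝ}
    {A : Matrix n n ℝ} (hmean : ∑ i, Q i = (Fintype.card ι : ℝ) • A) (M : Matrix n n ℝ) :
    ∑ i, logDetDiv (Q i) M = ∑ i, logDetDiv (Q i) A + Fintype.card ι * logDetDiv A M := by
  simp only [logDetDiv, Matrix.mul_sub, trace_sub, ← mul_sum, sum_add_distrib, sum_sub_distrib,
    ← trace_sum, hmean, Matrix.mul_smul, trace_smul, sum_const, card_univ, smul_eq_mul]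
  ring

theorem sum_logDetDiv_minimized_at_mean {ℓ K : ℕ} (hK : 0 < K)
    (Q : Fin K → Matrix (Fin ℓ) (Fin ℓ) ℝ) (hQ : ∀ k, (Q k).PosDef)
    (M : Matrix (Fin ℓ) (Fin ℓ) ℝ) (hM : M.PosDef) :
    ∑ k, logDetDiv (Q k) ((K : ℝ)⁻¹ • ∑ k, Q k) ≤ ∑ k, logDetDiv (Q k) M := by
  have hK' : (0 : ℝ) < K := Nat.cast_pos.2 hK
  set A := (K : ℝ)⁻¹ • ∑ k, Q k
  have hA : A.PosDef :=
    (posDef_sum ⟨⟨0, hK⟩, mem_univ _⟩ fun k _ => hQ k).smul (inv_pos.2 hK')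
  have hsum : ∑ k, Q k = (Fintype.card (Fin K) : ℝ) • A := by
    rw [Fintype.card_fin, smul_smul, mul_inv_cancel₀ hK'.ne', one_smul]
  rw [sum_logDetDiv_eq_sum_logDetDiv_add hsum M]
  exact le_add_of_nonneg_right (mul_nonneg (Nat.cast_nonneg _) (logDetDiv_nonneg hA hM))
end

section
/- Let M be a symmetric positive definite block matrix with blocks M_vv, M_vh, M_hv = M_vhᵀ, M_hh, and let Q_vv be symmetric positive definite of the same size as M_vv. Define Q_vh := Q_vv M_vv⁻¹ M_vh and Q_hh := M_hh − M_hv M_vv⁻¹ M_vh + M_hv M_vv⁻¹ Q_vv M_vv⁻¹ M_vh. Then the block matrix Q with blocks Q_vv, Q_vh, Q_vhᵀ, Q_hh is symmetric positive definite. -/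
/-!
Both `M` and the imputed matrix `Q` have the same Schur complement
`S = M_hh - M_hv M_vv⁻¹ M_vh` with respect to their upper-left blocks, since the term
`M_hv M_vv⁻¹ Q_vv M_vv⁻¹ M_vh` added to `Q_hh` is exactly `Q_vhᵀ Q_vv⁻¹ Q_vh`. A block matrix
with positive definite upper-left block is positive definite iff its Schur complement is, so
`M ≻ 0` gives `S ≻ 0`, and together with `Q_vv ≻ 0` this gives `Q ≻ 0`.
-/

open Matrix
open scoped ComplexOrder

namespace Matrix

variable {p q 𝕜 : Type*} [Fintype p] [DecidableEq p] [RCLike 𝕜]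

theorem posDef_iff_posSemidef_and_det_ne_zero {A : Matrix p p 𝕜} :
    A.PosDef ↔ A.PosSemidef ∧ A.det ≠ 0 :=
  ⟨fun h => ⟨h.posSemidef, h.det_pos.ne'⟩, fun h => h.1.posDef_iff_det_ne_zero.mpr h.2⟩

theorem posDef_fromBlocks₁₁_iff [Fintype q] [DecidableEq q] {A : Matrix p p 𝕜}
    (B : Matrix p q 𝕜) (D : Matrix q q 𝕜) (hA : A.PosDef) :
    (fromBlocks A B Bᴴ D).PosDef ↔ (D - Bᴴ * A⁻¹ * B).PosDef := by
  let := hA.isUnit.invertible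
  rw [posDef_iff_posSemidef_and_det_ne_zero, posDef_iff_posSemidef_and_det_ne_zero,
    PosDef.fromBlocks₁₁ B D hA, det_fromBlocks₁₁, invOf_eq_nonsing_inv,
    mul_ne_zero_iff, and_iff_right hA.det_pos.ne']

theorem conjTranspose_mul_inv_mul_eq {A Q : Matrix p p 𝕜} (B : Matrix p q 𝕜)
    (hA : A.IsHermitian) (hQ : Q.IsHermitian) (hQu : IsUnit Q) :
    (Q * A⁻¹ * B)ᴴ * Q⁻¹ * (Q * A⁻¹ * B) = Bᴴ * A⁻¹ * Q * A⁻¹ * B := by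
  simp only [conjTranspose_mul, hA.inv.eq, hQ.eq, Matrix.mul_assoc,
    nonsing_inv_mul_cancel_left _ _ ((isUnit_iff_isUnit_det Q).mp hQu)]

end Matrix

theorem imputed_completion_posDef {n m : ℕ}
    (Mvv : Matrix (Fin n) (Fin n) ℝ) (Mvh : Matrix (Fin n) (Fin m) ℝ)
    (Mhh : Matrix (Fin m) (Fin m) ℝ)
    (hM : (Matrix.fromBlocks Mvv Mvh Mvhᵀ Mhh).PosDef)
    (Qvv : Matrix (Fin n) (Fin n) ℝ) (hQvv : Qvv.PosDef) :
    (Matrix.fromBlocks Qvv (Qvv * Mvv⁻¹ * Mvh) (Qvv * Mvv⁻¹ * Mvh)ᵀ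
      (Mhh - Mvhᵀ * Mvv⁻¹ * Mvh + Mvhᵀ * Mvv⁻¹ * Qvv * Mvv⁻¹ * Mvh)).PosDef := by
  have hMvv : Mvv.PosDef := hM.submatrix Sum.inl_injective
  simp only [← conjTranspose_eq_transpose_of_trivial] at hM ⊢
  have hSchur : (Mhh - Mvhᴴ * Mvv⁻¹ * Mvh).PosDef :=
    (posDef_fromBlocks₁₁_iff Mvh Mhh hMvv).mp hM
  rw [posDef_fromBlocks₁₁_iff _ _ hQvv,
    conjTranspose_mul_inv_mul_eq Mvh hMvv.isHermitian hQvv.isHermitian hQvv.isUnit,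
    add_sub_cancel_right]
  exact hSchur
end

section
/- With Q_vh and Q_hh defined by the imputation formulas Q_vh = Q_vv M_vv⁻¹ M_vh and Q_hh = M_hh − M_hv M_vv⁻¹ M_vh + M_hv M_vv⁻¹ Q_vv M_vv⁻¹ M_vh, the Schur complement of Q_vv in the completed matrix Q equals the Schur complement of M_vv in M, i.e. Q_hh − Q_hv Q_vv⁻¹ Q_vh = M_hh − M_hv M_vv⁻¹ M_vh. -/
open Matrix

theorem imputed_completion_schur_complement {n m : ℕ}
    (Mvv : Matrix (Fin n) (Fin n) ℝ) (Mvh : Matrix (Fin n) (Fin m) ℝ)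
    (Mhh : Matrix (Fin m) (Fin m) ℝ)
    (hM : (Matrix.fromBlocks Mvv Mvh Mvhᵀ Mhh).PosDef)
    (Qvv : Matrix (Fin n) (Fin n) ℝ) (hQvv : Qvv.PosDef)
    (Qvh : Matrix (Fin n) (Fin m) ℝ) (Qhh : Matrix (Fin m) (Fin m) ℝ)
    (hQvh : Qvh = Qvv * Mvv⁻¹ * Mvh)
    (hQhh : Qhh = Mhh - Mvhᵀ * Mvv⁻¹ * Mvh + Mvhᵀ * Mvv⁻¹ * Qvv * Mvv⁻¹ * Mvh) :
    Qhh - Qvhᵀ * Qvv⁻¹ * Qvh = Mhh - Mvhᵀ * Mvv⁻¹ * Mvh := by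
  have hMvvsym : Mvvᵀ = Mvv := by
    have h := hM.isHermitian
    rw [Matrix.isHermitian_fromBlocks_iff] at h
    simpa [Matrix.IsHermitian] using h.1
  have hQsym : Qvvᵀ = Qvv := hQvv.isHermitian
  have hQinv : Qvv * Qvv⁻¹ = 1 := Matrix.mul_nonsing_inv _ (isUnit_iff_ne_zero.mpr hQvv.det_pos.ne')
  have hMinvsym : (Mvv⁻¹)ᵀ = Mvv⁻¹ := by
    rw [Matrix.transpose_nonsing_inv, hMvvsym]
  have key : Qvhᵀ * Qvv⁻¹ * Qvh = Mvhᵀ * Mvv⁻¹ * Qvv * Mvv⁻¹ * Mvh := by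
    subst hQvh
    simp only [Matrix.transpose_mul, hMinvsym, hQsym, Matrix.mul_assoc]
    rw [← Matrix.mul_assoc Qvv Qvv⁻¹, hQinv, Matrix.one_mul]
  rw [hQhh, key]; abel
end

section
/- Under the imputation formulas, the determinant of the completed matrix Q satisfies det Q = det Q_vv · det(M_hh − M_hv M_vv⁻¹ M_vh), i.e. det Q = det Q_vv · det M / det M_vv. -/
/-!
Writing `X = M_vv⁻¹ M_vh`, the completion is the congruence
`Q = [[1, 0], [Xᵀ, 1]] · diag(Q_vv, S) · [[1, X], [0, 1]]` of a block-diagonal matrix by a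
unipotent one, where `S = M_hh − M_hv M_vv⁻¹ M_vh` is the Schur complement of `M_vv` in `M`.
Hence `det Q = det Q_vv · det S`, and `det M = det M_vv · det S` is the Schur determinant formula.
-/

open Matrix

theorem Matrix.det_fromBlocks_congr_of_isSymm {m n R : Type*} [CommRing R] [Fintype m]
    [Fintype n] [DecidableEq m] [DecidableEq n] {A : Matrix m m R} (hA : A.IsSymm)
    (X : Matrix m n R) (S : Matrix n n R) :
    (fromBlocks A (A * X) (A * X)ᵀ (S + Xᵀ * A * X)).det = A.det * S.det := by
  have hfactor : fromBlocks A (A * X) (A * X)ᵀ (S + Xᵀ * A * X) =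
      fromBlocks 1 0 Xᵀ 1 * fromBlocks A 0 0 S * fromBlocks 1 X 0 1 := by
    rw [transpose_mul, hA.eq]
    simp only [fromBlocks_multiply]
    simp [Matrix.mul_assoc, add_comm]
  rw [hfactor, det_mul, det_mul, det_fromBlocks_zero₁₂, det_fromBlocks_zero₁₂,
    det_fromBlocks_zero₂₁]
  simp

theorem imputed_completion_det {n m : ℕ}
    (Mvv : Matrix (Fin n) (Fin n) ℝ) (Mvh : Matrix (Fin n) (Fin m) ℝ)
    (Mhh : Matrix (Fin m) (Fin m) ℝ)
    (hM : (Matrix.fromBlocks Mvv Mvh Mvhᵀ Mhh).PosDef)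
    (Qvv : Matrix (Fin n) (Fin n) ℝ) (hQvv : Qvv.PosDef)
    (Q : Matrix (Fin n ⊕ Fin m) (Fin n ⊕ Fin m) ℝ)
    (hQ : Q = Matrix.fromBlocks Qvv (Qvv * Mvv⁻¹ * Mvh) (Qvv * Mvv⁻¹ * Mvh)ᵀ
      (Mhh - Mvhᵀ * Mvv⁻¹ * Mvh + Mvhᵀ * Mvv⁻¹ * Qvv * Mvv⁻¹ * Mvh)) :
    Q.det = Qvv.det * (Mhh - Mvhᵀ * Mvv⁻¹ * Mvh).det ∧
      Q.det = Qvv.det * (Matrix.fromBlocks Mvv Mvh Mvhᵀ Mhh).det / Mvv.det := by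
  have hMvv : Mvv.PosDef := hM.submatrix Sum.inl_injective
  have hMvv_inv_symm : Mvv⁻¹.IsSymm := (isHermitian_iff_isSymm.mp hMvv.isHermitian).inv
  have hQ_congr : Q = fromBlocks Qvv (Qvv * (Mvv⁻¹ * Mvh)) (Qvv * (Mvv⁻¹ * Mvh))ᵀ
      (Mhh - Mvhᵀ * Mvv⁻¹ * Mvh + (Mvv⁻¹ * Mvh)ᵀ * Qvv * (Mvv⁻¹ * Mvh)) := by
    rw [hQ, transpose_mul Mvv⁻¹ Mvh, hMvv_inv_symm.eq]
    simp only [Matrix.mul_assoc]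
  have hdetQ : Q.det = Qvv.det * (Mhh - Mvhᵀ * Mvv⁻¹ * Mvh).det := by
    rw [hQ_congr, det_fromBlocks_congr_of_isSymm (isHermitian_iff_isSymm.mp hQvv.isHermitian)]
  have : Invertible Mvv := hMvv.isUnit.invertible
  refine ⟨hdetQ, ?_⟩
  rw [hdetQ, det_fromBlocks₁₁, invOf_eq_nonsing_inv, mul_left_comm, mul_div_cancel_left₀ _
    hMvv.det_pos.ne']
end

section
/- Under the imputation formulas, the LogDet divergence between the completed matrix Q and the model M equals the LogDet divergence between the visible blocks: LogDet(Q, M) = LogDet(Q_vv, M_vv). In particular, among all completions of Q_vv to a positive definite ℓ×ℓ matrix, the imputed completion minimizes LogDet(Q, M). -/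
/-!
Put `K = M_hv M_vv⁻¹` and `L = [[1, 0], [K, 1]]`, so `det L = 1`. With `S` the Schur complement
of `M_vv` in `M`, both `M` and the imputed `Q` are congruences by `L` of block-diagonal matrices,
`diag(M_vv, S)` and `diag(Q_vv, S)`. LogDet is invariant under a common congruence, so
`LogDet(Q, M) = LogDet(Q_vv, M_vv) + LogDet(S, S) = LogDet(Q_vv, M_vv)`.
Any other positive definite completion is `L P Lᵀ` with `P = [[Q_vv, B], [Bᵀ, C]]`, and
`LogDet(P, diag(M_vv, S)) = LogDet(Q_vv, M_vv) + LogDet(C - Bᵀ Q_vv⁻¹ B, S) + ½ tr(S⁻¹ Bᵀ Q_vv⁻¹ B)`,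
whose last two terms are nonnegative.
-/

open Matrix

open scoped ComplexOrder

namespace Matrix

theorem trace_fromBlocks {m n α : Type*} [Fintype m] [Fintype n] [AddCommMonoid α]
    (A : Matrix m m α) (B : Matrix m n α) (C : Matrix n m α) (D : Matrix n n α) :
    (fromBlocks A B C D).trace = A.trace + D.trace := by
  simp [trace, Fintype.sum_sum_type]

theorem PosDef.toBlocks₁₁ {m n 𝕜 : Type*} [RCLike 𝕜] {P : Matrix (m ⊕ n) (m ⊕ n) 𝕜}
    (hP : P.PosDef) : P.toBlocks₁₁.PosDef :=
  hP.submatrix Sum.inl_injective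

section PositiveDefinite

variable {m n : Type*} [Fintype m] [Fintype n] [DecidableEq m] [DecidableEq n]

theorem PosDef.fromBlocks_schur {𝕜 : Type*} [RCLike 𝕜] {A : Matrix m m 𝕜} {B : Matrix m n 𝕜}
    {D : Matrix n n 𝕜} (h : (fromBlocks A B Bᴴ D).PosDef) : (D - Bᴴ * A⁻¹ * B).PosDef := by
  have hA : A.PosDef := by simpa using h.toBlocks₁₁
  let := hA.isUnit.invertible
  refine ((PosDef.fromBlocks₁₁ B D hA).1 h.posSemidef).posDef_iff_det_ne_zero.2 ?_
  have hdet := h.det_pos.ne'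
  rw [det_fromBlocks₁₁, invOf_eq_nonsing_inv] at hdet
  exact right_ne_zero_of_mul hdet

theorem PosSemidef.trace_mul_nonneg {𝕜 : Type*} [RCLike 𝕜] {A B : Matrix n n 𝕜}
    (hA : A.PosSemidef) (hB : B.PosSemidef) : 0 ≤ (A * B).trace := by
  open scoped MatrixOrder in
  obtain ⟨T, rfl⟩ := CStarAlgebra.nonneg_iff_eq_star_mul_self.mp hA.nonneg
  rw [star_eq_conjTranspose, Matrix.mul_assoc, trace_mul_comm]
  exact (hB.mul_mul_conjTranspose_same T).trace_nonneg

theorem PosDef.mul_mul_transpose_of_det_ne_zero {P W : Matrix n n ℝ} (hP : P.PosDef)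
    (hW : W.det ≠ 0) : (W * P * Wᵀ).PosDef := by
  simpa [star_eq_conjTranspose] using
    (IsUnit.posDef_star_right_conjugate_iff ((isUnit_iff_isUnit_det W).2 hW.isUnit)).2 hP

theorem PosDef.log_det_le_trace_sub_card_s7 {A : Matrix n n ℝ} (hA : A.PosDef) :
    Real.log A.det ≤ A.trace - Fintype.card n := by
  have hev := hA.eigenvalues_pos
  rw [hA.isHermitian.det_eq_prod_eigenvalues, hA.isHermitian.trace_eq_sum_eigenvalues]
  simp only [RCLike.ofReal_real_eq_id, id_eq]
  rw [Real.log_prod fun i _ => (hev i).ne']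
  calc ∑ i, Real.log (hA.isHermitian.eigenvalues i)
      ≤ ∑ i, (hA.isHermitian.eigenvalues i - 1) :=
        Finset.sum_le_sum fun i _ => Real.log_le_sub_one_of_pos (hev i)
    _ = _ := by simp [Finset.sum_sub_distrib]

end PositiveDefinite

section BlockShear

variable {m n : Type*} [DecidableEq m] [DecidableEq n] {R : Type*} [CommRing R]

def blockShear (K : Matrix n m R) : Matrix (m ⊕ n) (m ⊕ n) R := fromBlocks 1 0 K 1

@[simp]
theorem blockShear_zero : blockShear (0 : Matrix n m R) = 1 := by
  simp [blockShear]

variable [Fintype m] [Fintype n]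

@[simp]
theorem det_blockShear (K : Matrix n m R) : (blockShear K).det = 1 := by
  simp [blockShear]

theorem blockShear_mul_blockShear (K K' : Matrix n m R) :
    blockShear K * blockShear K' = blockShear (K + K') := by
  simp [blockShear, fromBlocks_multiply, add_comm]

theorem blockShear_conj_blockShear_neg_conj (K : Matrix n m R)
    (X : Matrix (m ⊕ n) (m ⊕ n) R) :
    blockShear K * (blockShear (-K) * X * (blockShear (-K))ᵀ) * (blockShear K)ᵀ = X := by
  calc _ = blockShear K * blockShear (-K) * X * (blockShear K * blockShear (-K))ᵀ := by
        simp only [transpose_mul, Matrix.mul_assoc]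
    _ = X := by simp [blockShear_mul_blockShear]

theorem toBlocks₁₁_blockShear_conj (K : Matrix n m R) (P : Matrix (m ⊕ n) (m ⊕ n) R) :
    (blockShear K * P * (blockShear K)ᵀ).toBlocks₁₁ = P.toBlocks₁₁ := by
  conv_lhs => rw [← fromBlocks_toBlocks P]
  simp [blockShear, fromBlocks_transpose, fromBlocks_multiply]

theorem blockShear_conj_fromBlocks_zero (K : Matrix n m R) (X : Matrix m m R)
    (S : Matrix n n R) :
    blockShear K * fromBlocks X 0 0 S * (blockShear K)ᵀ =
      fromBlocks X (X * Kᵀ) (K * X) (K * X * Kᵀ + S) := by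
  simp [blockShear, fromBlocks_transpose, fromBlocks_multiply, Matrix.mul_assoc]

theorem blockShear_conj_fromBlocks_zero_eq {A X : Matrix m m R} (hA : A.IsSymm)
    (hX : X.IsSymm) (B : Matrix m n R) (S : Matrix n n R) :
    blockShear (Bᵀ * A⁻¹) * fromBlocks X 0 0 S * (blockShear (Bᵀ * A⁻¹))ᵀ =
      fromBlocks X (X * A⁻¹ * B) (X * A⁻¹ * B)ᵀ (S + Bᵀ * A⁻¹ * X * A⁻¹ * B) := by
  have hAinv : A⁻¹ᵀ = A⁻¹ := by rw [transpose_nonsing_inv, hA.eq]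
  rw [blockShear_conj_fromBlocks_zero]
  simp only [transpose_mul, transpose_transpose, hAinv, hX.eq, Matrix.mul_assoc, add_comm S]

theorem fromBlocks_eq_blockShear_conj {A : Matrix m m R} (hA : A.IsSymm) (hAdet : IsUnit A.det)
    (B : Matrix m n R) (D : Matrix n n R) :
    fromBlocks A B Bᵀ D =
      blockShear (Bᵀ * A⁻¹) * fromBlocks A 0 0 (D - Bᵀ * A⁻¹ * B) * (blockShear (Bᵀ * A⁻¹))ᵀ := by
  rw [blockShear_conj_fromBlocks_zero_eq hA hA]
  simp [Matrix.mul_assoc, mul_nonsing_inv_cancel_left _ _ hAdet,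
    nonsing_inv_mul_cancel_left _ _ hAdet]

end BlockShear

theorem PosDef.exists_blockShear_conj_eq {m n : Type*} [Fintype m] [Fintype n] [DecidableEq m]
    [DecidableEq n] (K : Matrix n m ℝ) {X : Matrix (m ⊕ n) (m ⊕ n) ℝ} (hX : X.PosDef) :
    ∃ P, P.PosDef ∧ P.toBlocks₁₁ = X.toBlocks₁₁ ∧ blockShear K * P * (blockShear K)ᵀ = X :=
  ⟨_, hX.mul_mul_transpose_of_det_ne_zero (by simp), toBlocks₁₁_blockShear_conj _ _,
    blockShear_conj_blockShear_neg_conj K X⟩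

end Matrix

section LogDetDiv

variable {k : Type*} [Fintype k] [DecidableEq k]

@[simp]
theorem logDetDiv_self (A : Matrix k k ℝ) : logDetDiv A A = 0 := by
  simp [logDetDiv]

theorem logDetDiv_conj {W P D : Matrix k k ℝ} (hW : W.det ≠ 0) (hP : P.det ≠ 0)
    (hD : D.det ≠ 0) : logDetDiv (W * P * Wᵀ) (W * D * Wᵀ) = logDetDiv P D := by
  have hlog (X : Matrix k k ℝ) (hX : X.det ≠ 0) :
      Real.log (W * X * Wᵀ).det = 2 * Real.log W.det + Real.log X.det := by
    rw [det_mul, det_mul, det_transpose, Real.log_mul (mul_ne_zero hW hX) hW,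
      Real.log_mul hW hX]
    ring
  have htrace : ((W * D * Wᵀ)⁻¹ * (W * P * Wᵀ - W * D * Wᵀ)).trace =
      (D⁻¹ * (P - D)).trace := by
    rw [← Matrix.sub_mul, ← Matrix.mul_sub, Matrix.mul_inv_rev, Matrix.mul_inv_rev]
    calc ((Wᵀ)⁻¹ * (D⁻¹ * W⁻¹) * (W * (P - D) * Wᵀ)).trace
        = ((Wᵀ)⁻¹ * (D⁻¹ * (P - D)) * Wᵀ).trace := by
          simp only [Matrix.mul_assoc, W.nonsing_inv_mul_cancel_left _ hW.isUnit]
      _ = (D⁻¹ * (P - D)).trace := by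
          rw [trace_mul_cycle, ← Matrix.mul_assoc, mul_nonsing_inv _ (by simpa using hW.isUnit),
            Matrix.one_mul]
  simp only [logDetDiv, hlog P hP, hlog D hD, htrace]
  ring

theorem logDetDiv_nonneg_s7 {A B : Matrix k k ℝ} (hA : A.PosDef) (hB : B.PosDef) :
    0 ≤ logDetDiv A B := by
  -- Writing `B⁻¹ = Tᵀ T`, the congruence by `T` turns `B` into `1`.
  open scoped MatrixOrder in
  obtain ⟨T, hT⟩ := CStarAlgebra.nonneg_iff_eq_star_mul_self.mp hB.inv.posSemidef.nonneg
  simp only [star_eq_conjTranspose, conjTranspose_eq_transpose_of_trivial] at hT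
  have hTdet : T.det ≠ 0 := by
    have := hB.inv.det_pos.ne'
    rw [hT, det_mul, det_transpose] at this
    exact right_ne_zero_of_mul this
  have hTBT : T * B * Tᵀ = 1 := by
    rw [← nonsing_inv_nonsing_inv B hB.det_pos.ne'.isUnit, hT, Matrix.mul_inv_rev,
      Matrix.mul_assoc, Matrix.mul_assoc, nonsing_inv_mul _ (by simpa using hTdet.isUnit),
      Matrix.mul_one, mul_nonsing_inv _ hTdet.isUnit]
  rw [← logDetDiv_conj hTdet hA.det_pos.ne' hB.det_pos.ne', hTBT]
  have := (hA.mul_mul_transpose_of_det_ne_zero hTdet).log_det_le_trace_sub_card_s7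
  simp only [logDetDiv, det_one, Real.log_one, inv_one, Matrix.one_mul, trace_sub, trace_one]
  linarith

variable {m n : Type*} [Fintype m] [Fintype n] [DecidableEq m] [DecidableEq n]

theorem logDetDiv_fromBlocks_fromBlocks_zero {Qv A : Matrix m m ℝ} {B : Matrix m n ℝ}
    {C : Matrix n m ℝ} {D S : Matrix n n ℝ} (hQv : Qv.det ≠ 0)
    (hE : (D - C * Qv⁻¹ * B).det ≠ 0) (hA : A.det ≠ 0) (hS : S.det ≠ 0) :
    logDetDiv (fromBlocks Qv B C D) (fromBlocks A 0 0 S) =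
      logDetDiv Qv A + logDetDiv (D - C * Qv⁻¹ * B) S + (S⁻¹ * (C * Qv⁻¹ * B)).trace / 2 := by
  let := Qv.invertibleOfIsUnitDet hQv.isUnit
  have hdetQ : (fromBlocks Qv B C D).det = Qv.det * (D - C * Qv⁻¹ * B).det := by
    rw [det_fromBlocks₁₁, invOf_eq_nonsing_inv]
  have hinv : (fromBlocks A 0 0 S)⁻¹ = fromBlocks A⁻¹ 0 0 S⁻¹ := by
    rw [inv_fromBlocks_zero₂₁_of_isUnit_iff _ _ _ (iff_of_true
      ((isUnit_iff_isUnit_det A).2 hA.isUnit) ((isUnit_iff_isUnit_det S).2 hS.isUnit))]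
    simp
  have htrace : ((fromBlocks A 0 0 S)⁻¹ * (fromBlocks Qv B C D - fromBlocks A 0 0 S)).trace =
      (A⁻¹ * (Qv - A)).trace + (S⁻¹ * (D - C * Qv⁻¹ * B - S)).trace +
        (S⁻¹ * (C * Qv⁻¹ * B)).trace := by
    rw [hinv, sub_eq_add_neg, fromBlocks_neg, fromBlocks_add, fromBlocks_multiply,
      trace_fromBlocks, add_assoc, ← trace_add, ← Matrix.mul_add]
    simp only [Matrix.zero_mul, add_zero, zero_add]
    abel_nf
  simp only [logDetDiv, hdetQ, det_fromBlocks_zero₂₁, Real.log_mul hQv hE, Real.log_mul hA hS,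
    htrace]
  ring

theorem logDetDiv_toBlocks₁₁_le {P : Matrix (m ⊕ n) (m ⊕ n) ℝ} {A : Matrix m m ℝ}
    {S : Matrix n n ℝ} (hP : P.PosDef) (hA : A.PosDef) (hS : S.PosDef) :
    logDetDiv P.toBlocks₁₁ A ≤ logDetDiv P (fromBlocks A 0 0 S) := by
  obtain ⟨Qv, B, D, rfl⟩ : ∃ Qv B D, P = fromBlocks Qv B Bᴴ D := by
    have hPH := hP.isHermitian
    rw [← fromBlocks_toBlocks P, isHermitian_fromBlocks_iff] at hPH
    exact ⟨_, _, _, by rw [hPH.2.1, fromBlocks_toBlocks]⟩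
  have hQv : Qv.PosDef := by simpa using hP.toBlocks₁₁
  have hE : (D - Bᴴ * Qv⁻¹ * B).PosDef := hP.fromBlocks_schur
  rw [toBlocks_fromBlocks₁₁, logDetDiv_fromBlocks_fromBlocks_zero hQv.det_pos.ne' hE.det_pos.ne'
    hA.det_pos.ne' hS.det_pos.ne']
  have hG : 0 ≤ (S⁻¹ * (Bᴴ * Qv⁻¹ * B)).trace :=
    hS.inv.posSemidef.trace_mul_nonneg (hQv.inv.posSemidef.conjTranspose_mul_mul_same B)
  linarith [logDetDiv_nonneg_s7 hE hS]

end LogDetDiv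

theorem imputed_completion_logDetDiv {n m : ℕ}
    (Mvv : Matrix (Fin n) (Fin n) ℝ) (Mvh : Matrix (Fin n) (Fin m) ℝ)
    (Mhh : Matrix (Fin m) (Fin m) ℝ)
    (hM : (Matrix.fromBlocks Mvv Mvh Mvhᵀ Mhh).PosDef)
    (Qvv : Matrix (Fin n) (Fin n) ℝ) (hQvv : Qvv.PosDef)
    (Q : Matrix (Fin n ⊕ Fin m) (Fin n ⊕ Fin m) ℝ)
    (hQ : Q = Matrix.fromBlocks Qvv (Qvv * Mvv⁻¹ * Mvh) (Qvv * Mvv⁻¹ * Mvh)ᵀ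
      (Mhh - Mvhᵀ * Mvv⁻¹ * Mvh + Mvhᵀ * Mvv⁻¹ * Qvv * Mvv⁻¹ * Mvh)) :
    logDetDiv Q (Matrix.fromBlocks Mvv Mvh Mvhᵀ Mhh) = logDetDiv Qvv Mvv ∧
      ∀ (Qvh' : Matrix (Fin n) (Fin m) ℝ) (Qhh' : Matrix (Fin m) (Fin m) ℝ),
        (Matrix.fromBlocks Qvv Qvh' Qvh'ᵀ Qhh').PosDef →
        logDetDiv Q (Matrix.fromBlocks Mvv Mvh Mvhᵀ Mhh) ≤
          logDetDiv (Matrix.fromBlocks Qvv Qvh' Qvh'ᵀ Qhh')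
            (Matrix.fromBlocks Mvv Mvh Mvhᵀ Mhh) := by
  have hMvv : Mvv.PosDef := by simpa using hM.toBlocks₁₁
  have hMvvSymm : Mvv.IsSymm := isHermitian_iff_isSymm.1 hMvv.1
  set S := Mhh - Mvhᵀ * Mvv⁻¹ * Mvh
  have hS : S.PosDef := by simpa using PosDef.fromBlocks_schur (B := Mvh) (by simpa using hM)
  set L := blockShear (Mvhᵀ * Mvv⁻¹)
  have hL : L.det ≠ 0 := by simp [L]
  have hMfac : fromBlocks Mvv Mvh Mvhᵀ Mhh = L * fromBlocks Mvv 0 0 S * Lᵀ :=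
    fromBlocks_eq_blockShear_conj hMvvSymm hMvv.det_pos.ne'.isUnit Mvh Mhh
  have hQfac : Q = L * fromBlocks Qvv 0 0 S * Lᵀ := by
    rw [hQ, blockShear_conj_fromBlocks_zero_eq hMvvSymm (isHermitian_iff_isSymm.1 hQvv.1)]
  have hdiag {X : Matrix (Fin n) (Fin n) ℝ} (hX : X.PosDef) : (fromBlocks X 0 0 S).det ≠ 0 := by
    simp [det_fromBlocks_zero₂₁, hX.det_pos.ne', hS.det_pos.ne']
  have imputed : logDetDiv Q (fromBlocks Mvv Mvh Mvhᵀ Mhh) = logDetDiv Qvv Mvv := by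
    rw [hQfac, hMfac, logDetDiv_conj hL (hdiag hQvv) (hdiag hMvv),
      logDetDiv_fromBlocks_fromBlocks_zero hQvv.det_pos.ne' (by simpa using hS.det_pos.ne')
        hMvv.det_pos.ne' hS.det_pos.ne']
    simp
  refine ⟨imputed, fun Qvh' Qhh' hQ' => ?_⟩
  obtain ⟨P, hP, hPvv, hPQ'⟩ := hQ'.exists_blockShear_conj_eq (Mvhᵀ * Mvv⁻¹)
  calc logDetDiv Q (fromBlocks Mvv Mvh Mvhᵀ Mhh) = logDetDiv P.toBlocks₁₁ Mvv := by
        rw [imputed, hPvv, toBlocks_fromBlocks₁₁]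
    _ ≤ logDetDiv P (fromBlocks Mvv 0 0 S) := logDetDiv_toBlocks₁₁_le hP hMvv hS
    _ = logDetDiv (L * P * Lᵀ) (L * fromBlocks Mvv 0 0 S * Lᵀ) :=
        (logDetDiv_conj hL hP.det_pos.ne' (hdiag hMvv)).symm
    _ = _ := by rw [hPQ', hMfac]
end

section
/- Let S be an ℓ×ℓ symmetric positive definite matrix with eigenvalues λ₁ ≥ … ≥ λ_ℓ and orthonormal eigenvectors u₁,…,u_ℓ, and fix q < ℓ. Define σ² := (1/(ℓ−q)) Σ_{j=q+1}^{ℓ} λ_j, U_q := [u₁,…,u_q], Λ_q := diag(λ₁,…,λ_q), and W := U_q(Λ_q − σ²I)^{1/2}. Assume λ_q > σ². Then (W, σ²) is a global minimizer over all (W', s) with s > 0 of the function f(W', s) := log det(W'W'ᵀ + sI) + trace((W'W'ᵀ + sI)⁻¹ S). -/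
/-!
Diagonalize the competitor's covariance as `C = V diag(D) Vᵀ` with `D = μ + s` antitone, where
`μ` are the sorted eigenvalues of `W'W'ᵀ`, at most `q` of them nonzero. With `S = U diag(λ) Uᵀ`,
`f(W', s) = ∑ᵢ log Dᵢ + ∑ⱼ λⱼ (P D⁻¹)ⱼ` for the doubly stochastic matrix `P = (UᵀV) ⊙ (UᵀV)`, so by
Birkhoff's theorem and the rearrangement inequality `f(W', s) ≥ ∑ⱼ (log Dⱼ + λⱼ / Dⱼ)`.
By `log x ≤ x - 1`, each of the first `q` terms is at least `log λⱼ + 1`; the last `ℓ - q` terms all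
have `Dⱼ = s`, and their sum is smallest when `s` is the mean `σ²` of the tail eigenvalues.
These lower bounds add up to exactly `f(W, σ²)`.
-/

open Matrix Finset

namespace Matrix

section OrthogonalConj

variable {n R : Type*} [Fintype n] [DecidableEq n] [CommRing R]

theorem det_conj_diagonal {V : Matrix n n R} (hV : Vᵀ * V = 1) (d : n → R) :
    (V * diagonal d * Vᵀ).det = ∏ i, d i := by
  rw [det_mul, det_mul, det_diagonal, mul_comm, ← mul_assoc, ← det_mul, hV, det_one, one_mul]

theorem inv_conj_diagonal {K : Type*} [Field K] {V : Matrix n n K} (hV : Vᵀ * V = 1)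
    {d : n → K} (hd : ∀ i, d i ≠ 0) :
    (V * diagonal d * Vᵀ)⁻¹ = V * diagonal d⁻¹ * Vᵀ := by
  refine inv_eq_right_inv ?_
  simp only [Matrix.mul_assoc]
  rw [← Matrix.mul_assoc Vᵀ V, hV, Matrix.one_mul, ← Matrix.mul_assoc (diagonal d),
    diagonal_mul_diagonal,
    show (fun i => d i * d⁻¹ i) = fun _ => 1 from funext fun i => mul_inv_cancel₀ (hd i),
    diagonal_one, Matrix.one_mul, mul_eq_one_comm.mp hV]

theorem transpose_mul_conj_diagonal_mul {V : Matrix n n R} (hV : Vᵀ * V = 1) (d : n → R) :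
    Vᵀ * (V * diagonal d * Vᵀ) * V = diagonal d := by
  simp only [Matrix.mul_assoc]
  rw [← Matrix.mul_assoc Vᵀ V, hV, Matrix.one_mul, Matrix.mul_one]

theorem conj_diagonal_add_smul_one {V : Matrix n n R} (hV : V * Vᵀ = 1) (d : n → R) (s : R) :
    V * diagonal d * Vᵀ + s • 1 = V * diagonal (fun i => d i + s) * Vᵀ := by
  have hs : s • (1 : Matrix n n R) = V * diagonal (fun _ => s) * Vᵀ := by
    rw [← smul_one_eq_diagonal, Matrix.mul_smul, Matrix.mul_one, Matrix.smul_mul, hV]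
  rw [hs, ← add_mul, ← mul_add, diagonal_add]

theorem trace_conj_diagonal_mul_conj_diagonal (U V : Matrix n n R) (x lam : n → R) :
    (V * diagonal x * Vᵀ * (U * diagonal lam * Uᵀ)).trace
      = ∑ j, lam j * ((Uᵀ * V) * diagonal x * (Uᵀ * V)ᵀ) j j := by
  rw [show V * diagonal x * Vᵀ * (U * diagonal lam * Uᵀ)
      = V * diagonal x * Vᵀ * U * diagonal lam * Uᵀ by simp only [Matrix.mul_assoc],
    trace_mul_comm, show Uᵀ * (V * diagonal x * Vᵀ * U * diagonal lam)
      = Uᵀ * V * diagonal x * (Uᵀ * V)ᵀ * diagonal lam by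
        simp only [transpose_mul, transpose_transpose, Matrix.mul_assoc]]
  simp only [trace, Matrix.diag, mul_diagonal]
  exact Finset.sum_congr rfl fun j _ => mul_comm _ _

theorem conj_diagonal_apply_self (Q : Matrix n n R) (x : n → R) (i : n) :
    (Q * diagonal x * Qᵀ) i i = ((Q ⊙ Q) *ᵥ x) i := by
  rw [mul_apply]
  simp only [mul_diagonal, transpose_apply, mulVec, dotProduct, hadamard_apply]
  exact Finset.sum_congr rfl fun j _ => by ring

end OrthogonalConj

theorem hadamard_self_mem_doublyStochastic {n : Type*} [Fintype n] [DecidableEq n]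
    {Q : Matrix n n ℝ} (hQ : Qᵀ * Q = 1) : Q ⊙ Q ∈ doublyStochastic ℝ n := by
  have hQQ : Q * Qᵀ = 1 := mul_eq_one_comm.mp hQ
  have hrow (i : n) : ∑ j, Q i j * Q i j = 1 := by
    simpa [mul_apply] using congrFun (congrFun hQQ i) i
  have hcol (j : n) : ∑ i, Q i j * Q i j = 1 := by
    simpa [mul_apply] using congrFun (congrFun hQ j) j
  exact mem_doublyStochastic_iff_sum.mpr ⟨fun i j => mul_self_nonneg _, hrow, hcol⟩

theorem submatrix_mul_diagonal_mul_transpose {R m n : Type*} [CommRing R] [Fintype m]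
    [Fintype n] [DecidableEq m] [DecidableEq n] (U : Matrix n n R) {f : m → n}
    (hf : Function.Injective f) (h : m → R) :
    U.submatrix id f * diagonal h * (U.submatrix id f)ᵀ
      = U * diagonal (Function.extend f h 0) * Uᵀ := by
  ext a b
  rw [mul_apply, mul_apply]
  simp only [mul_diagonal, transpose_apply, submatrix_apply, id_eq]
  refine Fintype.sum_of_injective f hf _ _ (fun i hi => ?_) (fun k => ?_)
  · rw [Function.extend_apply' _ _ _ (by simpa using hi)]
    simp
  · rw [hf.extend_apply]

theorem PosDef.pos_of_eq_conj_diagonal {n : Type*} [Fintype n] [DecidableEq n]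
    {S V : Matrix n n ℝ} (hS : S.PosDef) (hV : Vᵀ * V = 1) {d : n → ℝ}
    (h : S = V * diagonal d * Vᵀ) (i : n) : 0 < d i := by
  have hinj : Function.Injective V.mulVec := fun x y hxy => by
    simpa [mulVec_mulVec, hV] using congrArg (Vᵀ *ᵥ ·) hxy
  have hd : diagonal d = Vᵀ * S * V := by rw [h, transpose_mul_conj_diagonal_mul hV]
  have := hS.conjTranspose_mul_mul_same hinj
  rw [conjTranspose_eq_transpose_of_trivial, ← hd, posDef_diagonal_iff] at this
  exact this i

theorem IsHermitian.exists_antitone_diagonalization {n : ℕ} {A : Matrix (Fin n) (Fin n) ℝ}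
    (hA : A.IsHermitian) :
    ∃ (V : Matrix (Fin n) (Fin n) ℝ) (μ : Fin n → ℝ),
      Vᵀ * V = 1 ∧ Antitone μ ∧ A = V * diagonal μ * Vᵀ := by
  set V₀ : Matrix (Fin n) (Fin n) ℝ := (hA.eigenvectorUnitary : Matrix (Fin n) (Fin n) ℝ)
  have hV₀ : V₀ᵀ * V₀ = 1 := by
    simpa [V₀, star_eq_conjTranspose] using Unitary.coe_star_mul_self hA.eigenvectorUnitary
  have hA₀ : A = V₀ * diagonal hA.eigenvalues * V₀ᵀ := by
    conv_lhs => rw [hA.spectral_theorem]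
    simp [V₀, Unitary.conjStarAlgAut_apply, star_eq_conjTranspose, RCLike.ofReal_real_eq_id]
  set τ := Tuple.sort (-hA.eigenvalues)
  refine ⟨V₀.submatrix id τ, hA.eigenvalues ∘ τ, ?_, ?_, ?_⟩
  · rw [transpose_submatrix, ← submatrix_mul _ _ _ _ _ Function.bijective_id, hV₀,
      submatrix_one_equiv]
  · intro i j hij
    simpa using Tuple.monotone_sort (-hA.eigenvalues) hij
  · rw [← submatrix_diagonal_equiv, transpose_submatrix, submatrix_mul_equiv,
      submatrix_mul_equiv, submatrix_id_id]
    exact hA₀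

end Matrix

theorem Fin.card_filter_le_val (ℓ q : ℕ) : #{j : Fin ℓ | q ≤ (j : ℕ)} = ℓ - q := by
  have h := Finset.card_filter_add_card_filter_not (s := univ) (fun j : Fin ℓ => (j : ℕ) < q)
  simp only [Fin.card_filter_val_lt, not_lt, card_univ, Fintype.card_fin] at h
  omega

theorem Antitone.eq_zero_of_card_ne_zero_le {n q : ℕ} {α : Type*} [PartialOrder α] [Zero α]
    [DecidableEq α] {μ : Fin n → α} (hμ : Antitone μ) (h0 : ∀ i, 0 ≤ μ i)
    (hcard : Fintype.card {i // μ i ≠ 0} ≤ q) {j : Fin n} (hj : q ≤ j) : μ j = 0 := by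
  by_contra hne
  have hpos : 0 < μ j := lt_of_le_of_ne (h0 j) (Ne.symm hne)
  have hsub : Finset.Iic j ⊆ Finset.univ.filter (fun i => μ i ≠ 0) := fun i hi =>
    Finset.mem_filter.mpr ⟨Finset.mem_univ i,
      (lt_of_lt_of_le hpos (hμ (Finset.mem_Iic.mp hi))).ne'⟩
  have := Finset.card_le_card hsub
  rw [Fin.card_Iic, ← Fintype.card_subtype] at this
  omega

theorem Matrix.exists_antitone_diagonalization_self_mul_transpose {ℓ q : ℕ}
    (B : Matrix (Fin ℓ) (Fin q) ℝ) :
    ∃ (V : Matrix (Fin ℓ) (Fin ℓ) ℝ) (μ : Fin ℓ → ℝ), Vᵀ * V = 1 ∧ Antitone μ ∧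
      (∀ i, 0 ≤ μ i) ∧ (∀ i : Fin ℓ, q ≤ i → μ i = 0) ∧ B * Bᵀ = V * diagonal μ * Vᵀ := by
  have hsymm : (B * Bᵀ).IsHermitian := by
    simpa using (posSemidef_self_mul_conjTranspose B).isHermitian
  obtain ⟨V, μ, hV, hμ, hBB⟩ := hsymm.exists_antitone_diagonalization
  have hdiag : diagonal μ = (Vᵀ * B) * (Vᵀ * B)ᵀ := by
    rw [← transpose_mul_conj_diagonal_mul hV μ, ← hBB]
    simp only [transpose_mul, transpose_transpose, Matrix.mul_assoc]
  have h0 : ∀ i, 0 ≤ μ i := by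
    rw [← posSemidef_diagonal_iff, hdiag]
    simpa using posSemidef_self_mul_conjTranspose (Vᵀ * B)
  have hcard : Fintype.card {i // μ i ≠ 0} ≤ q := by
    rw [← rank_diagonal, hdiag]
    exact (rank_mul_le_left _ _).trans (rank_le_width _)
  exact ⟨V, μ, hV, hμ, h0, fun j hj => hμ.eq_zero_of_card_ne_zero_le h0 hcard hj, hBB⟩

theorem Matrix.self_mul_transpose_add_smul_one_eq_conj_diagonal {ℓ q : ℕ} (hq : q ≤ ℓ)
    {U : Matrix (Fin ℓ) (Fin ℓ) ℝ} (hU : U * Uᵀ = 1) {lam : Fin ℓ → ℝ} {c : ℝ}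
    (hc : ∀ i : Fin ℓ, (i : ℕ) < q → c ≤ lam i) {W : Matrix (Fin ℓ) (Fin q) ℝ}
    (hW : W = U.submatrix id (Fin.castLE hq) *
      diagonal (fun i : Fin q => √(lam (Fin.castLE hq i) - c))) :
    W * Wᵀ + c • 1 = U * diagonal (fun j : Fin ℓ => if q ≤ (j : ℕ) then c else lam j) * Uᵀ := by
  have hsqrt (i : Fin q) : √(lam (Fin.castLE hq i) - c) * √(lam (Fin.castLE hq i) - c)
      = lam (Fin.castLE hq i) - c :=
    Real.mul_self_sqrt (sub_nonneg.mpr (hc _ (by simp)))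
  have hd : (fun j => Function.extend (Fin.castLE hq) (fun i => lam (Fin.castLE hq i) - c) 0 j
      + c) = fun j : Fin ℓ => if q ≤ (j : ℕ) then c else lam j := by
    funext j
    by_cases hj : q ≤ (j : ℕ)
    · rw [Function.extend_apply' _ _ _ fun ⟨i, hi⟩ => by subst hi; simp at hj; omega]
      simp [hj]
    · obtain ⟨i, rfl⟩ : j ∈ Set.range (Fin.castLE hq) := by simpa [Fin.range_castLE] using hj
      rw [(Fin.castLE_injective hq).extend_apply]
      simp
  rw [hW, transpose_mul, diagonal_transpose, Matrix.mul_assoc, ← Matrix.mul_assoc (diagonal _),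
    diagonal_mul_diagonal, ← Matrix.mul_assoc]
  simp only [hsqrt]
  rw [submatrix_mul_diagonal_mul_transpose U (Fin.castLE_injective hq),
    conj_diagonal_add_smul_one hU, hd]

theorem Antivary.sum_mul_le_sum_mul_mulVec {n R : Type*} [Fintype n] [DecidableEq n] [Field R]
    [LinearOrder R] [IsStrictOrderedRing R] {f g : n → R} (hfg : Antivary f g)
    {P : Matrix n n R} (hP : P ∈ doublyStochastic R n) :
    ∑ i, f i * g i ≤ ∑ i, f i * (P *ᵥ g) i := by
  obtain ⟨w, hw0, hw1, rfl⟩ := exists_eq_sum_perm_of_mem_doublyStochastic hP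
  calc ∑ i, f i * g i = ∑ σ, w σ * ∑ i, f i * g i := by rw [← Finset.sum_mul, hw1, one_mul]
    _ ≤ ∑ σ, w σ * ∑ i, f i * g (σ i) := Finset.sum_le_sum fun σ _ =>
      mul_le_mul_of_nonneg_left hfg.sum_mul_le_sum_mul_comp_perm (hw0 σ)
    _ = ∑ i, f i * ((∑ σ, w σ • σ.permMatrix R) *ᵥ g) i := by
      simp only [sum_mulVec, smul_mulVec, permMatrix_mulVec, Finset.sum_apply, Pi.smul_apply,
        Function.comp_apply, smul_eq_mul, Finset.mul_sum]
      rw [Finset.sum_comm]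
      exact Finset.sum_congr rfl fun _ _ => Finset.sum_congr rfl fun _ _ => by ring

noncomputable def negLogLikelihood {n : Type*} [Fintype n] [DecidableEq n]
    (C S : Matrix n n ℝ) : ℝ :=
  Real.log C.det + (C⁻¹ * S).trace

section NegLogLikelihood

variable {n : Type*} [Fintype n] [DecidableEq n]

theorem negLogLikelihood_conj_diagonal (U : Matrix n n ℝ) {V : Matrix n n ℝ} (hV : Vᵀ * V = 1)
    {D : n → ℝ} (hD : ∀ i, 0 < D i) (lam : n → ℝ) :
    negLogLikelihood (V * diagonal D * Vᵀ) (U * diagonal lam * Uᵀ)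
      = ∑ i, (Real.log (D i) + lam i * (((Uᵀ * V) ⊙ (Uᵀ * V)) *ᵥ D⁻¹) i) := by
  rw [negLogLikelihood, det_conj_diagonal hV, Real.log_prod fun i _ => (hD i).ne',
    inv_conj_diagonal hV fun i => (hD i).ne', trace_conj_diagonal_mul_conj_diagonal,
    ← Finset.sum_add_distrib]
  simp only [conj_diagonal_apply_self]

theorem negLogLikelihood_conj_diagonal_self {U : Matrix n n ℝ} (hU : Uᵀ * U = 1)
    {D : n → ℝ} (hD : ∀ i, 0 < D i) (lam : n → ℝ) :
    negLogLikelihood (U * diagonal D * Uᵀ) (U * diagonal lam * Uᵀ)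
      = ∑ i, (Real.log (D i) + lam i / D i) := by
  rw [negLogLikelihood_conj_diagonal U hU hD, hU, one_hadamard]
  simp [div_eq_mul_inv]

theorem sum_log_add_div_le_negLogLikelihood [LinearOrder n] {U V : Matrix n n ℝ}
    (hU : Uᵀ * U = 1) (hV : Vᵀ * V = 1) {lam D : n → ℝ} (hlam : Antitone lam)
    (hD : ∀ i, 0 < D i) (hD_anti : Antitone D) :
    ∑ i, (Real.log (D i) + lam i / D i)
      ≤ negLogLikelihood (V * diagonal D * Vᵀ) (U * diagonal lam * Uᵀ) := by
  have hQ : (Uᵀ * V)ᵀ * (Uᵀ * V) = 1 := by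
    rw [transpose_mul, transpose_transpose, Matrix.mul_assoc, ← Matrix.mul_assoc U,
      mul_eq_one_comm.mp hU, Matrix.one_mul, hV]
  have hDinv : Monotone D⁻¹ := fun i j hij => inv_anti₀ (hD j) (hD_anti hij)
  rw [negLogLikelihood_conj_diagonal U hV hD, Finset.sum_add_distrib, Finset.sum_add_distrib]
  refine (add_le_add_iff_left _).mpr ?_
  simpa only [div_eq_mul_inv, Pi.inv_apply] using
    (hlam.antivary hDinv).sum_mul_le_sum_mul_mulVec (hadamard_self_mem_doublyStochastic hQ)

end NegLogLikelihood

theorem Real.log_add_one_le_log_add_div {a x : ℝ} (ha : 0 < a) (hx : 0 < x) :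
    Real.log a + 1 ≤ Real.log x + a / x := by
  have := Real.log_le_sub_one_of_pos (div_pos ha hx)
  rw [Real.log_div ha.ne' hx.ne'] at this
  linarith

theorem sum_log_add_div_le_of_eq_on {ι : Type*} [Fintype ι] (p : ι → Prop) [DecidablePred p]
    {lam D : ι → ℝ} {c s : ℝ} (hlam : ∀ i, 0 < lam i) (hD : ∀ i, 0 < D i) (hc : 0 < c)
    (hs : 0 < s) (hDs : ∀ i, p i → D i = s) (hmean : c * #{i | p i} = ∑ i with p i, lam i) :
    ∑ i, (Real.log (if p i then c else lam i) + lam i / (if p i then c else lam i))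
      ≤ ∑ i, (Real.log (D i) + lam i / D i) := by
  conv_lhs => rw [← Finset.sum_filter_add_sum_filter_not _ p]
  conv_rhs => rw [← Finset.sum_filter_add_sum_filter_not _ p]
  apply add_le_add
  · have hmean' : ∑ i with p i, lam i / c = #{i | p i} := by
      rw [← Finset.sum_div, ← hmean, mul_div_cancel_left₀ _ hc.ne']
    have hsc : ∑ i with p i, lam i / s = #{i | p i} * (c / s) := by
      rw [← Finset.sum_div, ← hmean]; ring
    calc ∑ i with p i, (Real.log (if p i then c else lam i) + lam i / (if p i then c else lam i))
        = #{i | p i} * (Real.log c + 1) := by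
          rw [Finset.sum_congr rfl fun i hi => by rw [if_pos (Finset.mem_filter.mp hi).2],
            Finset.sum_add_distrib, Finset.sum_const, hmean', nsmul_eq_mul]; ring
      _ ≤ #{i | p i} * (Real.log s + c / s) :=
          mul_le_mul_of_nonneg_left (Real.log_add_one_le_log_add_div hc hs) (Nat.cast_nonneg _)
      _ = ∑ i with p i, (Real.log (D i) + lam i / D i) := by
          rw [Finset.sum_congr rfl fun i hi => by rw [hDs i (Finset.mem_filter.mp hi).2],
            Finset.sum_add_distrib, Finset.sum_const, hsc, nsmul_eq_mul]; ring
  · refine Finset.sum_le_sum fun i hi => ?_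
    rw [if_neg (Finset.mem_filter.mp hi).2, div_self (hlam i).ne']
    exact Real.log_add_one_le_log_add_div (hlam i) (hD i)

theorem ppca_global_minimizer {ℓ q : ℕ} (hq : q < ℓ)
    (S : Matrix (Fin ℓ) (Fin ℓ) ℝ) (hS : S.PosDef)
    (lam : Fin ℓ → ℝ) (hlam : Antitone lam)
    (U : Matrix (Fin ℓ) (Fin ℓ) ℝ) (hU : Uᵀ * U = 1)
    (hSdecomp : S = U * Matrix.diagonal lam * Uᵀ)
    (σ2 : ℝ)
    (hσ2 : σ2 = (1 / (ℓ - q : ℝ)) * ∑ j ∈ Finset.univ.filter (fun j : Fin ℓ => q ≤ (j : ℕ)), lam j)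
    (hgap : ∀ i : Fin ℓ, (i : ℕ) < q → σ2 < lam i)
    (W : Matrix (Fin ℓ) (Fin q) ℝ)
    (hW : W = U.submatrix id (Fin.castLE hq.le) *
      Matrix.diagonal (fun i : Fin q => Real.sqrt (lam (Fin.castLE hq.le i) - σ2))) :
    ∀ (W' : Matrix (Fin ℓ) (Fin q) ℝ) (s : ℝ), 0 < s →
      Real.log (W * Wᵀ + σ2 • (1 : Matrix (Fin ℓ) (Fin ℓ) ℝ)).det +
          ((W * Wᵀ + σ2 • (1 : Matrix (Fin ℓ) (Fin ℓ) ℝ))⁻¹ * S).trace ≤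
        Real.log (W' * W'ᵀ + s • (1 : Matrix (Fin ℓ) (Fin ℓ) ℝ)).det +
          ((W' * W'ᵀ + s • (1 : Matrix (Fin ℓ) (Fin ℓ) ℝ))⁻¹ * S).trace := by
  intro W' s hs
  have hlam_pos := hS.pos_of_eq_conj_diagonal hU hSdecomp
  have hmean : σ2 * #{j : Fin ℓ | q ≤ (j : ℕ)}
      = ∑ j ∈ univ.filter (fun j : Fin ℓ => q ≤ (j : ℕ)), lam j := by
    rw [hσ2, Fin.card_filter_le_val, Nat.cast_sub hq.le]
    field_simp [sub_ne_zero.mpr (Nat.cast_lt.mpr hq).ne']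
  have hσ2_pos : 0 < σ2 := by
    have : 0 < ∑ j ∈ univ.filter (fun j : Fin ℓ => q ≤ (j : ℕ)), lam j :=
      Finset.sum_pos (fun j _ => hlam_pos j) ⟨⟨q, hq⟩, by simp⟩
    exact pos_of_mul_pos_left (hmean ▸ this) (Nat.cast_nonneg _)
  obtain ⟨V, μ, hV, hμ_anti, hμ_nonneg, hμ_tail, hW'⟩ :=
    exists_antitone_diagonalization_self_mul_transpose W'
  have hμs_pos (j : Fin ℓ) : 0 < μ j + s := by linarith [hμ_nonneg j]
  change negLogLikelihood _ S ≤ negLogLikelihood _ S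
  rw [self_mul_transpose_add_smul_one_eq_conj_diagonal hq.le (mul_eq_one_comm.mp hU)
      (fun i hi => (hgap i hi).le) hW, hW', conj_diagonal_add_smul_one (mul_eq_one_comm.mp hV),
    hSdecomp, negLogLikelihood_conj_diagonal_self hU fun j => by
      split_ifs; exacts [hσ2_pos, hlam_pos j]]
  calc _ ≤ ∑ j, (Real.log (μ j + s) + lam j / (μ j + s)) :=
        sum_log_add_div_le_of_eq_on (fun j : Fin ℓ => q ≤ (j : ℕ)) hlam_pos hμs_pos hσ2_pos hs
          (fun j hj => by rw [hμ_tail j hj, zero_add]) hmean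
    _ ≤ _ := sum_log_add_div_le_negLogLikelihood hU hV hlam hμs_pos
          fun i j hij => by simp [hμ_anti hij]
end
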